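/- arXiv:1601.05637 — 3 statements merged into one kernel-verified Lean document; each statement's English description precedes it below -/
import Mathlib

section
/- Let R = [r_{n,k}] be the Riordan array determined by a nonnegative A-sequence (a_n) and Z-sequence (z_n). If the coefficient matrix J(R) is totally positive (TP), then R is TP. -/
/-- An infinite real matrix `M` is totally positive (TP) if every minor
(determinant of a square submatrix with rows and columns chosen in
increasing order) is nonnegative. -/
def IsTP (M : ℕ → ℕ → ℝ) : Prop :=
  ∀ k : ℕ, ∀ rows cols : Fin k → ℕ, StrictMono rows → StrictMono cols →
    0 ≤ (Matrix.of fun i j => M (rows i) (cols j)).det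

/-- The coefficient matrix `J(R)` of the Riordan array with `A`-sequence `a` and
`Z`-sequence `z`: column 0 is `z`, and the `(i,j)` entry for `j ≥ 1` is `a (i+1-j)`
(zero when `j > i+1`). -/
def coeffMatrix (a z : ℕ → ℝ) : ℕ → ℕ → ℝ := fun i j =>
  if j = 0 then z i else if j ≤ i + 1 then a (i + 1 - j) else 0

/-! Row `n + 1` of a Riordan array is row `n` times `J(R)`, so by the Cauchy–Binet formula a minor
of `R` avoiding row `0` is a sum of products of a minor of `J(R)` and a minor of `R` with every row
index lowered by one. Since row `0` of `R` is `(1, 0, 0, …)`, a minor containing row `0` either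
vanishes or equals the minor with its first row and column deleted. Induction on the order of the
minor plus the sum of its row indices therefore shows every minor is nonnegative. -/

open Finset Matrix

variable {S ι : Type*} [CommRing S] {k : ℕ}

theorem det_of_sum_mul_eq_sum_piFinset (s : Finset ι) (A : Fin k → ι → S)
    (B : ι → Fin k → S) :
    (of fun i j => ∑ x ∈ s, A i x * B x j).det =
      ∑ r ∈ Fintype.piFinset fun _ => s,
        (∏ i, A i (r i)) * (of fun i j => B (r i) j).det := by
  have hrows : (of fun i j => ∑ x ∈ s, A i x * B x j) =
      fun i => ∑ x ∈ s, A i x • B x := by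
    ext i j
    simp [Finset.sum_apply]
  rw [hrows]
  change detRowAlternating.toMultilinearMap _ = _
  rw [MultilinearMap.map_sum_finset]
  refine sum_congr rfl fun r _ => ?_
  rw [MultilinearMap.map_smul_univ, smul_eq_mul]
  rfl

theorem sum_filter_injective_eq_sum_strictMono_sum_perm {M : Type*} [LinearOrder ι]
    [AddCommMonoid M] (s : Finset ι) (g : (Fin k → ι) → M) :
    ∑ r ∈ (Fintype.piFinset fun _ : Fin k => s).filter Function.Injective, g r =
      ∑ f ∈ (Fintype.piFinset fun _ : Fin k => s).filter StrictMono,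
        ∑ σ : Equiv.Perm (Fin k), g (f ∘ σ) := by
  rw [sum_sigma']
  symm
  refine sum_bij (fun p _ => p.1 ∘ p.2) ?_ ?_ ?_ fun _ _ => rfl
  · rintro ⟨f, σ⟩ hp
    simp only [mem_sigma, mem_filter, mem_univ, and_true, Fintype.mem_piFinset] at hp ⊢
    exact ⟨fun i => hp.1 (σ i), hp.2.injective.comp σ.injective⟩
  · rintro ⟨f, σ⟩ hp ⟨f', σ'⟩ hp' heq
    simp only [mem_sigma, mem_filter, mem_univ, and_true] at hp hp'
    have hrange : Set.range f = Set.range f' := by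
      rw [← σ.surjective.range_comp f, ← σ'.surjective.range_comp f']
      exact congrArg Set.range heq
    obtain rfl : f = f' := (hp.2.range_inj hp'.2).1 hrange
    obtain rfl : σ = σ' := Equiv.ext fun i => hp.2.injective (congrFun heq i)
    rfl
  · intro r hr
    simp only [mem_filter, Fintype.mem_piFinset] at hr
    refine ⟨⟨r ∘ Tuple.sort r, (Tuple.sort r)⁻¹⟩, ?_, ?_⟩
    · simp only [mem_sigma, mem_filter, mem_univ, and_true, Fintype.mem_piFinset]
      exact ⟨fun i => hr.1 _,
        (Tuple.monotone_sort r).strictMono_of_injective (hr.2.comp (Tuple.sort r).injective)⟩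
    · ext i
      simp [Equiv.Perm.inv_def]

/-- The Cauchy–Binet formula. -/
theorem det_of_sum_mul_eq_sum_strictMono [LinearOrder ι] (s : Finset ι) (A : Fin k → ι → S)
    (B : ι → Fin k → S) :
    (of fun i j => ∑ x ∈ s, A i x * B x j).det =
      ∑ f ∈ (Fintype.piFinset fun _ => s).filter StrictMono,
        (of fun i j => A i (f j)).det * (of fun i j => B (f i) j).det := by
  rw [det_of_sum_mul_eq_sum_piFinset, ← sum_filter_add_sum_filter_not _ Function.Injective,
    sum_filter_injective_eq_sum_strictMono_sum_perm]
  have hrepeated : ∑ r ∈ (Fintype.piFinset fun _ => s).filter (¬ Function.Injective ·),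
      (∏ i, A i (r i)) * (of fun i j => B (r i) j).det = 0 := by
    refine sum_eq_zero fun r hr => ?_
    obtain ⟨i, j, hij, hne⟩ : ∃ i j, r i = r j ∧ i ≠ j := by
      simpa [Function.Injective] using (mem_filter.1 hr).2
    rw [det_zero_of_row_eq hne (by funext l; simp [hij]), mul_zero]
  rw [hrepeated, add_zero]
  refine sum_congr rfl fun f _ => ?_
  have hpermute (σ : Equiv.Perm (Fin k)) : (of fun i j => B (f (σ i)) j).det =
      Equiv.Perm.sign σ * (of fun i j => B (f i) j).det :=
    det_permute σ (of fun i j => B (f i) j)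
  rw [← det_transpose, det_apply', sum_mul]
  refine sum_congr rfl fun σ _ => ?_
  simp only [Function.comp_apply, hpermute, transpose_apply, of_apply]
  ring

theorem det_of_sum_mul_nonneg [PartialOrder S] [IsOrderedRing S] [LinearOrder ι] (s : Finset ι)
    (A : Fin k → ι → S) (B : ι → Fin k → S)
    (hA : ∀ f : Fin k → ι, StrictMono f → 0 ≤ (of fun i j => A i (f j)).det)
    (hB : ∀ f : Fin k → ι, StrictMono f → 0 ≤ (of fun i j => B (f i) j).det) :
    0 ≤ (of fun i j => ∑ x ∈ s, A i x * B x j).det := by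
  rw [det_of_sum_mul_eq_sum_strictMono]
  exact sum_nonneg fun f hf => mul_nonneg (hA f (mem_filter.1 hf).2) (hB f (mem_filter.1 hf).2)

structure IsRiordanArray (a z : ℕ → ℝ) (R : ℕ → ℕ → ℝ) : Prop where
  zero_zero : R 0 0 = 1
  eq_zero_of_lt : ∀ n k, n < k → R n k = 0
  succ_zero : ∀ n, R (n + 1) 0 = ∑ j ∈ range (n + 1), z j * R n j
  succ_succ : ∀ n k, R (n + 1) (k + 1) = ∑ j ∈ range (n + 1), a j * R n (k + j)

namespace IsRiordanArray

variable {a z : ℕ → ℝ} {R : ℕ → ℕ → ℝ}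

theorem sum_range_mul_eq_of_lt (hR : IsRiordanArray a z R) {n N : ℕ} (hN : n < N)
    (g : ℕ → ℝ) :
    ∑ s ∈ range N, R n s * g s = ∑ s ∈ range (n + 1), R n s * g s :=
  (sum_subset (range_subset_range.2 hN) fun s _ hs => by
    rw [hR.eq_zero_of_lt n s (by simpa using hs), zero_mul]).symm

theorem succ_eq_sum_mul_coeffMatrix (hR : IsRiordanArray a z R) {n N : ℕ} (hN : n < N) (c : ℕ) :
    R (n + 1) c = ∑ s ∈ range N, R n s * coeffMatrix a z s c := by
  rcases c with _ | c
  · rw [hR.sum_range_mul_eq_of_lt hN, hR.succ_zero]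
    exact sum_congr rfl fun s _ => by simp [coeffMatrix, mul_comm]
  · have hbelow : ∑ s ∈ range c, R n s * coeffMatrix a z s (c + 1) = 0 :=
      sum_eq_zero fun s hs => by
        simp only [coeffMatrix, if_neg c.succ_ne_zero,
          if_neg (by simp at hs; omega : ¬c + 1 ≤ s + 1), mul_zero]
    rw [hR.sum_range_mul_eq_of_lt hN, hR.succ_succ,
      ← hR.sum_range_mul_eq_of_lt (N := c + (n + 1)) (by omega),
      sum_range_add _ c (n + 1), hbelow, zero_add]
    refine sum_congr rfl fun j _ => ?_
    simp only [coeffMatrix, if_neg c.succ_ne_zero, if_pos (by omega : c + 1 ≤ c + j + 1)]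
    rw [mul_comm]
    congr 2
    omega

theorem det_minor_eq_det_minor_succ (hR : IsRiordanArray a z R) {rows cols : Fin (k + 1) → ℕ}
    (hrows : rows 0 = 0) (hcols : cols 0 = 0) (hmono : StrictMono cols) :
    (of fun i j => R (rows i) (cols j)).det =
      (of fun (i j : Fin k) => R (rows i.succ) (cols j.succ)).det := by
  rw [det_succ_row_zero, Fin.sum_univ_succ, sum_eq_zero fun j _ => ?_, add_zero]
  · simp [hrows, hcols, hR.zero_zero]
    rfl
  · rw [of_apply, hrows, hR.eq_zero_of_lt 0 _ (hcols ▸ hmono (Fin.succ_pos j)), mul_zero,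
      zero_mul]

theorem det_minor_eq_zero (hR : IsRiordanArray a z R) {rows cols : Fin (k + 1) → ℕ}
    (hrows : rows 0 = 0) (hcols : 0 < cols 0) (hmono : Monotone cols) :
    (of fun i j => R (rows i) (cols j)).det = 0 :=
  det_eq_zero_of_row_eq_zero 0 fun j => by
    rw [of_apply, hrows, hR.eq_zero_of_lt 0 _ (hcols.trans_le (hmono (Fin.zero_le j)))]

theorem det_minor_nonneg_of_pos (hR : IsRiordanArray a z R) (hJ : IsTP (coeffMatrix a z))
    {rows cols : Fin k → ℕ} (hpos : ∀ i, 0 < rows i) (hcols : StrictMono cols)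
    (hpred : ∀ f : Fin k → ℕ, StrictMono f →
      0 ≤ (of fun i j => R (rows i - 1) (f j)).det) :
    0 ≤ (of fun i j => R (rows i) (cols j)).det := by
  have hentries : (of fun i j => R (rows i) (cols j)) =
      of fun i j => ∑ s ∈ range (∑ i, rows i),
        R (rows i - 1) s * coeffMatrix a z s (cols j) := by
    ext i j
    have hlt : rows i - 1 < ∑ i, rows i := (Nat.sub_lt (hpos i) one_pos).trans_le
      (single_le_sum (fun i _ => Nat.zero_le _) (mem_univ i))
    rw [of_apply, of_apply, ← hR.succ_eq_sum_mul_coeffMatrix hlt, Nat.sub_add_cancel (hpos i)]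
  rw [hentries]
  exact det_of_sum_mul_nonneg _ _ _ hpred fun f hf => hJ k f cols hf hcols

theorem isTP (hR : IsRiordanArray a z R) (hJ : IsTP (coeffMatrix a z)) : IsTP R := by
  suffices key : ∀ m k (rows cols : Fin k → ℕ), k + ∑ i, rows i = m → StrictMono rows →
      StrictMono cols → 0 ≤ (of fun i j => R (rows i) (cols j)).det from
    fun k rows cols => key _ k rows cols rfl
  intro m
  induction m using Nat.strong_induction_on with
  | _ m ih =>
  rintro (_ | k) rows cols rfl hrows hcols
  · simp
  by_cases hrow0 : rows 0 = 0
  · rcases Nat.eq_zero_or_pos (cols 0) with hcol0 | hcol0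
    · rw [hR.det_minor_eq_det_minor_succ hrow0 hcol0 hcols]
      refine ih _ ?_ k _ _ rfl (hrows.comp Fin.strictMono_succ) (hcols.comp Fin.strictMono_succ)
      simp [Fin.sum_univ_succ (f := rows), hrow0]
    · exact (hR.det_minor_eq_zero hrow0 hcol0 hcols.monotone).ge
  · have hpos (i : Fin (k + 1)) : 0 < rows i :=
      (Nat.pos_of_ne_zero hrow0).trans_le (hrows.monotone (Fin.zero_le i))
    have hsum : ∑ i, (rows i - 1) < ∑ i, rows i :=
      sum_lt_sum (fun i _ => Nat.sub_le (rows i) 1) ⟨0, mem_univ _, Nat.sub_lt (hpos 0) one_pos⟩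
    exact hR.det_minor_nonneg_of_pos hJ hpos hcols fun f hf =>
      ih _ (by omega) _ _ f rfl (fun i j hij => Nat.sub_lt_sub_right (hpos i) (hrows hij)) hf

end IsRiordanArray

theorem riordan_TP_of_coeff_TP_general (a z : ℕ → ℝ)
    (R : ℕ → ℕ → ℝ)
    (hR00 : R 0 0 = 1)
    (htri : ∀ n k, n < k → R n k = 0)
    (hZ : ∀ n, R (n + 1) 0 = ∑ j ∈ Finset.range (n + 1), z j * R n j)
    (hA : ∀ n k, R (n + 1) (k + 1) = ∑ j ∈ Finset.range (n + 1), a j * R n (k + j))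
    (hJ : IsTP (coeffMatrix a z)) :
    IsTP R :=
  IsRiordanArray.isTP ⟨hR00, htri, hZ, hA⟩ hJ

theorem riordan_TP_of_coeff_TP (a z : ℕ → ℝ) (ha : ∀ n, 0 ≤ a n) (hz : ∀ n, 0 ≤ z n)
    (R : ℕ → ℕ → ℝ)
    (hR00 : R 0 0 = 1)
    (htri : ∀ n k, n < k → R n k = 0)
    (hZ : ∀ n, R (n + 1) 0 = ∑ j ∈ Finset.range (n + 1), z j * R n j)
    (hA : ∀ n k, R (n + 1) (k + 1) = ∑ j ∈ Finset.range (n + 1), a j * R n (k + j))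
    (hJ : IsTP (coeffMatrix a z)) :
    IsTP R :=
  riordan_TP_of_coeff_TP_general a z R hR00 htri hZ hA hJ
end

section
/- Let a,b,r,s,t be nonnegative reals and let J be the infinite Jacobi matrix with J_{0,0}=a, J_{1,0}=b, J_{i,i}=s for i≥1, J_{i,i+1}=r for i≥0, J_{i,i-1}=t for i≥2, and all other entries 0. Then J is totally positive (TP) if and only if s² ≥ 4rt and a·(s+√(s²−4rt))/2 ≥ b·r. -/
/-- The Jacobi matrix with `J 0 0 = a`, `J 1 0 = b`, diagonal `s` from row 1 on,
superdiagonal `r`, and subdiagonal `t` from row 2 on. -/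
def jacobiMatrix (a b r s t : ℝ) : ℕ → ℕ → ℝ := fun i j =>
  if i = 0 ∧ j = 0 then a
  else if i = 1 ∧ j = 0 then b
  else if i = j ∧ 1 ≤ i then s
  else if j = i + 1 then r
  else if i = j + 1 ∧ 2 ≤ i then t
  else 0

/-!
A nonnegative tridiagonal matrix is TP as soon as its minors on consecutive rows and columns
are nonnegative: a minor with increasing rows `ρ` and columns `κ` is block triangular, the first
block being either the single entry `M (ρ 0) (κ 0)` (when `ρ 0 ≠ κ 0`) or a consecutive minor
(when `ρ` and `κ` start with a common run `p, p + 1, …, p + m - 1`).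

For the Jacobi matrix the consecutive minors from row `1` on are the continuants
`D (n + 2) = s D (n + 1) - r t D n`, and the leading ones are `a D (n + 1) - b r D n`.
If `λ = (s + √(s² - 4 r t)) / 2 ≥ μ ≥ 0` are the roots of `x² - s x + r t`, then
`D (n + 1) = λ D n + μ ^ (n + 1)`, so all minors are nonnegative when `a λ ≥ b r`.
Conversely, if `s² < 4 r t` the ratios `D (n + 1) / D n` would decrease by at least
`2 √(r t) - s > 0` at every step while staying positive, and if `a λ < b r` then
`(b r - a λ) D n ≤ a μ ^ (n + 1)` contradicts `D n ≥ (n + 1) μ ^ n`.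
-/

theorem exists_consecutive_prefix {k : ℕ} {ρ κ : Fin k → ℕ} (hρ : StrictMono ρ)
    (hκ : StrictMono κ) (hk : 0 < k) {p : ℕ} (hρ0 : ρ ⟨0, hk⟩ = p) (hκ0 : κ ⟨0, hk⟩ = p) :
    ∃ m, 0 < m ∧ m ≤ k ∧ (∀ i : Fin k, (i : ℕ) < m → ρ i = p + i ∧ κ i = p + i) ∧
      ((∀ i : Fin k, m ≤ (i : ℕ) → p + m < ρ i) ∨ ∀ i : Fin k, m ≤ (i : ℕ) → p + m < κ i) := by
  classical
  have hex : ∃ m, ∀ h : m < k, ¬(ρ ⟨m, h⟩ = p + m ∧ κ ⟨m, h⟩ = p + m) :=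
    ⟨k, fun h => absurd h (lt_irrefl k)⟩
  obtain ⟨m, hbad, hmin⟩ : ∃ m, (∀ h : m < k, ¬(ρ ⟨m, h⟩ = p + m ∧ κ ⟨m, h⟩ = p + m)) ∧
      ∀ i < m, ∃ h : i < k, ρ ⟨i, h⟩ = p + i ∧ κ ⟨i, h⟩ = p + i :=
    ⟨Nat.find hex, Nat.find_spec hex, fun i hi => by simpa using Nat.find_min hex hi⟩
  have hprefix (i : Fin k) (hi : (i : ℕ) < m) : ρ i = p + i ∧ κ i = p + i := by
    simpa using (hmin i hi).2
  have hmk : m ≤ k := not_lt.mp fun h => by simpa using hmin k h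
  have hm0 : 0 < m := Nat.pos_of_ne_zero fun h => by subst h; exact hbad hk (by simp [hρ0, hκ0])
  refine ⟨m, hm0, hmk, hprefix, ?_⟩
  rcases hmk.lt_or_eq with hmk | rfl
  · have hprev := hprefix ⟨m - 1, by omega⟩ (by simp; omega)
    have hρm := hρ (show (⟨m - 1, by omega⟩ : Fin k) < ⟨m, hmk⟩ by simp [Fin.lt_def]; omega)
    have hκm := hκ (show (⟨m - 1, by omega⟩ : Fin k) < ⟨m, hmk⟩ by simp [Fin.lt_def]; omega)
    simp only at hprev
    rcases Classical.not_and_iff_not_or_not.mp (hbad hmk) with hρ' | hκ'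
    · exact Or.inl fun i hi => by have := hρ.monotone (show (⟨m, hmk⟩ : Fin k) ≤ i from hi); omega
    · exact Or.inr fun i hi => by have := hκ.monotone (show (⟨m, hmk⟩ : Fin k) ≤ i from hi); omega
  · exact Or.inl fun i hi => absurd i.isLt (by omega)

section Tridiagonal

variable {R : Type*}

def IsTridiagonal [Zero R] (M : ℕ → ℕ → R) : Prop :=
  ∀ i j, i + 2 ≤ j ∨ j + 2 ≤ i → M i j = 0

def consecutiveSubmatrix (M : ℕ → ℕ → R) (p k : ℕ) : Matrix (Fin k) (Fin k) R :=
  Matrix.of fun i j => M (p + i) (p + j)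

theorem consecutiveSubmatrix_submatrix_succ (M : ℕ → ℕ → R) (p k : ℕ) :
    (consecutiveSubmatrix M p (k + 1)).submatrix Fin.succ Fin.succ =
      consecutiveSubmatrix M (p + 1) k := by
  ext i j
  simp [consecutiveSubmatrix, add_right_comm, add_assoc]

variable [CommRing R]

theorem IsTridiagonal.det_consecutiveSubmatrix_succ_succ {M : ℕ → ℕ → R}
    (hM : IsTridiagonal M) (p k : ℕ) :
    (consecutiveSubmatrix M p (k + 2)).det =
      M p p * (consecutiveSubmatrix M (p + 1) (k + 1)).det -
        M p (p + 1) * M (p + 1) p * (consecutiveSubmatrix M (p + 2) k).det := by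
  have hcol : ((consecutiveSubmatrix M p (k + 2)).submatrix Fin.succ (Fin.succAbove 1)).det =
      M (p + 1) p * (consecutiveSubmatrix M (p + 2) k).det := by
    rw [Matrix.det_succ_column_zero, Fin.sum_univ_succ, Finset.sum_eq_zero fun i _ => by
      simp [consecutiveSubmatrix, hM (p + (i + 1 + 1)) p (Or.inr (by omega))]]
    simp only [Matrix.submatrix_submatrix]
    rw [← consecutiveSubmatrix_submatrix_succ, ← consecutiveSubmatrix_submatrix_succ]
    simp [consecutiveSubmatrix, Function.comp_def, Fin.succAbove, Fin.lt_def]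
  rw [Matrix.det_succ_row_zero, Fin.sum_univ_succ, Fin.sum_univ_succ,
    Finset.sum_eq_zero fun j _ => by
      simp [consecutiveSubmatrix, hM p (p + (j + 1 + 1)) (Or.inl (by omega))],
    Fin.succ_zero_eq_one, hcol, Fin.succAbove_zero, consecutiveSubmatrix_submatrix_succ]
  simp [consecutiveSubmatrix]
  ring

theorem Matrix.det_eq_det_mul_det_of_blockTriangular {m n : ℕ}
    (A : Matrix (Fin (m + n)) (Fin (m + n)) R)
    (h : (∀ i j : Fin (m + n), (i : ℕ) < m → m ≤ (j : ℕ) → A j i = 0) ∨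
      ∀ i j : Fin (m + n), (i : ℕ) < m → m ≤ (j : ℕ) → A i j = 0) :
    A.det = (A.submatrix (Fin.castAdd n) (Fin.castAdd n)).det *
      (A.submatrix (Fin.natAdd m) (Fin.natAdd m)).det := by
  rw [← det_submatrix_equiv_self finSumFinEquiv A, ← fromBlocks_toBlocks (A.submatrix _ _)]
  rcases h with h | h
  · rw [show toBlocks₂₁ (A.submatrix finSumFinEquiv finSumFinEquiv) = 0 by
      ext; simp [toBlocks₂₁, h], det_fromBlocks_zero₂₁]
    rfl
  · rw [show toBlocks₁₂ (A.submatrix finSumFinEquiv finSumFinEquiv) = 0 by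
      ext; simp [toBlocks₁₂, h], det_fromBlocks_zero₁₂]
    rfl

variable [PartialOrder R]

theorem IsTridiagonal.exists_blockTriangular_split {M : ℕ → ℕ → R} (hM : IsTridiagonal M)
    (hnn : ∀ i j, 0 ≤ M i j) (hcons : ∀ p k, 0 ≤ (consecutiveSubmatrix M p k).det) {k : ℕ}
    {ρ κ : Fin k → ℕ} (hρ : StrictMono ρ) (hκ : StrictMono κ) (hk : 0 < k) :
    ∃ m, 0 < m ∧ ∃ hmk : m ≤ k,
      0 ≤ (Matrix.of fun i j : Fin m => M (ρ (Fin.castLE hmk i)) (κ (Fin.castLE hmk j))).det ∧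
      ((∀ i j : Fin k, (i : ℕ) < m → m ≤ (j : ℕ) → M (ρ j) (κ i) = 0) ∨
        ∀ i j : Fin k, (i : ℕ) < m → m ≤ (j : ℕ) → M (ρ i) (κ j) = 0) := by
  have h0 (i : Fin k) (hi : (i : ℕ) < 1) : i = ⟨0, hk⟩ := by ext; simp; omega
  have hsucc (f : Fin k → ℕ) (hf : StrictMono f) (j : Fin k) (hj : 1 ≤ (j : ℕ)) :
      f ⟨0, hk⟩ < f j := hf (Fin.lt_def.mpr (by rw [Fin.val_mk]; omega))
  rcases lt_trichotomy (ρ ⟨0, hk⟩) (κ ⟨0, hk⟩) with hlt | heq | hgt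
  · refine ⟨1, one_pos, hk, by simpa using hnn _ _, Or.inr fun i j hi hj => hM _ _ (Or.inl ?_)⟩
    have := hsucc κ hκ j hj
    rw [h0 i hi]
    omega
  · obtain ⟨m, hm0, hmk, hprefix, hgap⟩ := exists_consecutive_prefix hρ hκ hk rfl heq.symm
    refine ⟨m, hm0, hmk, ?_, ?_⟩
    · convert hcons (ρ ⟨0, hk⟩) m using 2
      ext i j
      simp [consecutiveSubmatrix, (hprefix (Fin.castLE hmk i) i.isLt).1,
        (hprefix (Fin.castLE hmk j) j.isLt).2]
    · rcases hgap with hgap | hgap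
      · refine Or.inl fun i j hi hj => hM _ _ (Or.inr ?_)
        have := hgap j hj
        have := (hprefix i hi).2
        omega
      · refine Or.inr fun i j hi hj => hM _ _ (Or.inl ?_)
        have := hgap j hj
        have := (hprefix i hi).1
        omega
  · refine ⟨1, one_pos, hk, by simpa using hnn _ _, Or.inl fun i j hi hj => hM _ _ (Or.inr ?_)⟩
    have := hsucc ρ hρ j hj
    rw [h0 i hi]
    omega

theorem IsTridiagonal.det_minor_nonneg [IsOrderedRing R] {M : ℕ → ℕ → R}
    (hM : IsTridiagonal M) (hnn : ∀ i j, 0 ≤ M i j)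
    (hcons : ∀ p k, 0 ≤ (consecutiveSubmatrix M p k).det) (k : ℕ) (ρ κ : Fin k → ℕ)
    (hρ : StrictMono ρ) (hκ : StrictMono κ) :
    0 ≤ (Matrix.of fun i j => M (ρ i) (κ j)).det := by
  induction k using Nat.strong_induction_on with
  | _ k ih =>
  rcases Nat.eq_zero_or_pos k with rfl | hk
  · simp
  obtain ⟨m, hm0, hmk, hfirst, hsplit⟩ := hM.exists_blockTriangular_split hnn hcons hρ hκ hk
  obtain ⟨n, rfl⟩ := Nat.exists_eq_add_of_le hmk
  rw [Matrix.det_eq_det_mul_det_of_blockTriangular (Matrix.of fun i j => M (ρ i) (κ j)) hsplit]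
  exact mul_nonneg hfirst (ih n (by omega) _ _ (hρ.comp (Fin.strictMono_natAdd m))
    (hκ.comp (Fin.strictMono_natAdd m)))

end Tridiagonal

theorem IsTridiagonal.isTP_iff {M : ℕ → ℕ → ℝ} (hM : IsTridiagonal M) (hnn : ∀ i j, 0 ≤ M i j) :
    IsTP M ↔ ∀ p k, 0 ≤ (consecutiveSubmatrix M p k).det :=
  ⟨fun h p k => h k _ _ (fun _ _ hij => Nat.add_lt_add_left hij p)
    (fun _ _ hij => Nat.add_lt_add_left hij p), hM.det_minor_nonneg hnn⟩

section tridiagDet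

variable {R : Type*} [CommRing R]

/-- The determinant of any `n × n` tridiagonal matrix with diagonal `s` and products `q` of
opposite off-diagonal entries. -/
def tridiagDet (s q : R) : ℕ → R
  | 0 => 1
  | 1 => s
  | n + 2 => s * tridiagDet s q (n + 1) - q * tridiagDet s q n

theorem tridiagDet_succ_eq {s q L μ : R} (hsum : L + μ = s) (hprod : L * μ = q) (n : ℕ) :
    tridiagDet s q (n + 1) = L * tridiagDet s q n + μ ^ (n + 1) := by
  induction n with
  | zero => simp [tridiagDet, ← hsum]
  | succ n ih =>
    rw [tridiagDet, ih, ← hsum, ← hprod]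
    ring

variable [LinearOrder R] [IsStrictOrderedRing R] {s q L μ : R}

theorem tridiagDet_nonneg (hsum : L + μ = s) (hprod : L * μ = q) (hL : 0 ≤ L) (hμ : 0 ≤ μ)
    (n : ℕ) : 0 ≤ tridiagDet s q n := by
  induction n with
  | zero => simp [tridiagDet]
  | succ n ih =>
    rw [tridiagDet_succ_eq hsum hprod]
    positivity

theorem mul_tridiagDet_le_succ (hsum : L + μ = s) (hprod : L * μ = q) (hμ : 0 ≤ μ) (n : ℕ) :
    L * tridiagDet s q n ≤ tridiagDet s q (n + 1) := by
  rw [tridiagDet_succ_eq hsum hprod]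
  exact le_add_of_nonneg_right (pow_nonneg hμ _)

theorem succ_mul_pow_le_tridiagDet (hsum : L + μ = s) (hprod : L * μ = q) (hμ : 0 ≤ μ)
    (hμL : μ ≤ L) (n : ℕ) : (n + 1) * μ ^ n ≤ tridiagDet s q n := by
  induction n with
  | zero => simp [tridiagDet]
  | succ n ih =>
    have hD := tridiagDet_nonneg hsum hprod (hμ.trans hμL) hμ n
    calc ((n + 1 : ℕ) + 1 : R) * μ ^ (n + 1) = μ * ((n + 1) * μ ^ n) + μ ^ (n + 1) := by
          push_cast; ring
      _ ≤ L * tridiagDet s q n + μ ^ (n + 1) := by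
          linarith [mul_le_mul_of_nonneg_left ih hμ, mul_le_mul_of_nonneg_right hμL hD]
      _ = tridiagDet s q (n + 1) := (tridiagDet_succ_eq hsum hprod n).symm

theorem tridiagDet_pos (hq : 0 < q) (h : ∀ n, 0 ≤ tridiagDet s q n) (n : ℕ) :
    0 < tridiagDet s q n := by
  induction n with
  | zero => simp [tridiagDet]
  | succ n ih =>
    refine (h (n + 1)).lt_of_ne' fun h0 => ?_
    have := h (n + 2)
    rw [tridiagDet, h0] at this
    nlinarith

end tridiagDet

theorem nonpos_of_forall_nat_mul_le {δ C : ℝ} (h : ∀ n : ℕ, n * δ ≤ C) : δ ≤ 0 := by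
  by_contra! hδ
  obtain ⟨n, hn⟩ := exists_nat_gt (C / δ)
  have := h n
  rw [div_lt_iff₀ hδ] at hn
  linarith

theorem four_mul_le_sq_of_tridiagDet_nonneg {s q : ℝ} (h : ∀ n, 0 ≤ tridiagDet s q n) :
    4 * q ≤ s ^ 2 := by
  by_contra! hlt
  have hq : 0 < q := by nlinarith [sq_nonneg s]
  have hD := tridiagDet_pos hq h
  have hsqrt : s < 2 * √q := by
    nlinarith [Real.sq_sqrt hq.le, Real.sqrt_nonneg q]
  set x : ℕ → ℝ := fun n => tridiagDet s q (n + 1) / tridiagDet s q n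
  have hx (n : ℕ) : 0 < x n := div_pos (hD _) (hD _)
  have hstep (n : ℕ) : x (n + 1) + (2 * √q - s) ≤ x n := by
    have hrec : x (n + 1) = s - q / x n := by
      simp only [x, tridiagDet]
      field_simp [(hD n).ne', (hD (n + 1)).ne']
    have hamgm : 2 * √q ≤ x n + q / x n := by
      rw [← sub_nonneg, show x n + q / x n - 2 * √q = (x n - √q) ^ 2 / x n by
        field_simp [(hx n).ne']; rw [sub_sq, Real.sq_sqrt hq.le]; ring]
      exact div_nonneg (sq_nonneg _) (hx n).le
    linarith
  have hdescent (n : ℕ) : x n + n * (2 * √q - s) ≤ x 0 := by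
    induction n with
    | zero => simp
    | succ n ih => push_cast; linarith [hstep n]
  linarith [nonpos_of_forall_nat_mul_le (δ := 2 * √q - s) (C := x 0)
    fun n => by linarith [hdescent n, hx n]]

theorem le_mul_of_forall_mul_tridiagDet_le {s q L μ a c : ℝ} (hsum : L + μ = s)
    (hprod : L * μ = q) (hμ : 0 ≤ μ) (hμL : μ ≤ L)
    (h : ∀ n, c * tridiagDet s q n ≤ a * tridiagDet s q (n + 1)) : c ≤ a * L := by
  by_contra! hlt
  have hε (n : ℕ) : (c - a * L) * tridiagDet s q n ≤ a * μ * μ ^ n := by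
    have := h n
    rw [tridiagDet_succ_eq hsum hprod, pow_succ'] at this
    linarith
  have haμ : 0 < a * μ := by
    have := hε 0
    simp only [tridiagDet, mul_one, pow_zero] at this
    linarith
  have hμ0 : 0 < μ := hμ.lt_of_ne fun h0 => by simp [← h0] at haμ
  refine (sub_pos.mpr hlt).not_ge (nonpos_of_forall_nat_mul_le (C := a * μ) fun n => ?_)
  have hlow := mul_le_mul_of_nonneg_left (succ_mul_pow_le_tridiagDet hsum hprod hμ hμL n)
    (sub_pos.mpr hlt).le
  have : (c - a * L) * (n + 1) * μ ^ n ≤ a * μ * μ ^ n := by linarith [hε n]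
  nlinarith [le_of_mul_le_mul_right this (pow_pos hμ0 n)]

theorem exists_roots_of_four_mul_le_sq {s q : ℝ} (hs : 0 ≤ s) (hq : 0 ≤ q)
    (hd : 4 * q ≤ s ^ 2) :
    ∃ μ, (s + √(s ^ 2 - 4 * q)) / 2 + μ = s ∧ (s + √(s ^ 2 - 4 * q)) / 2 * μ = q ∧
      0 ≤ μ ∧ μ ≤ (s + √(s ^ 2 - 4 * q)) / 2 := by
  have hsq := Real.sq_sqrt (sub_nonneg.mpr hd)
  have hle : √(s ^ 2 - 4 * q) ≤ s := by
    rw [Real.sqrt_le_left hs]; linarith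
  refine ⟨(s - √(s ^ 2 - 4 * q)) / 2, by ring, by nlinarith, by linarith,
    by linarith [Real.sqrt_nonneg (s ^ 2 - 4 * q)]⟩

section jacobiMatrix

variable {a b r s t : ℝ}

@[simp] theorem jacobiMatrix_zero_zero : jacobiMatrix a b r s t 0 0 = a := by
  simp [jacobiMatrix]

@[simp] theorem jacobiMatrix_one_zero : jacobiMatrix a b r s t 1 0 = b := by
  simp [jacobiMatrix]

@[simp] theorem jacobiMatrix_succ_succ (i : ℕ) : jacobiMatrix a b r s t (i + 1) (i + 1) = s := by
  simp [jacobiMatrix]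

@[simp] theorem jacobiMatrix_self_succ (i : ℕ) : jacobiMatrix a b r s t i (i + 1) = r := by
  simp [jacobiMatrix]

@[simp] theorem jacobiMatrix_add_two_succ (i : ℕ) :
    jacobiMatrix a b r s t (i + 2) (i + 1) = t := by
  simp [jacobiMatrix]

theorem isTridiagonal_jacobiMatrix : IsTridiagonal (jacobiMatrix a b r s t) := by
  intro i j h
  simp only [jacobiMatrix]
  split_ifs <;> first | rfl | omega

theorem jacobiMatrix_nonneg (ha : 0 ≤ a) (hb : 0 ≤ b) (hr : 0 ≤ r) (hs : 0 ≤ s) (ht : 0 ≤ t)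
    (i j : ℕ) : 0 ≤ jacobiMatrix a b r s t i j := by
  simp only [jacobiMatrix]
  split_ifs <;> first | assumption | exact le_rfl

theorem det_consecutiveSubmatrix_jacobiMatrix_succ (p k : ℕ) :
    (consecutiveSubmatrix (jacobiMatrix a b r s t) (p + 1) k).det = tridiagDet s (r * t) k := by
  induction k using Nat.strong_induction_on generalizing p with
  | _ k ih =>
  match k with
  | 0 => simp [tridiagDet]
  | 1 => simp [consecutiveSubmatrix, tridiagDet]
  | k + 2 =>
    rw [isTridiagonal_jacobiMatrix.det_consecutiveSubmatrix_succ_succ,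
      ih (k + 1) (by omega) (p + 1), show p + 1 + 2 = p + 2 + 1 by ring, ih k (by omega) (p + 2)]
    simp [tridiagDet]

theorem det_consecutiveSubmatrix_jacobiMatrix_zero (k : ℕ) :
    (consecutiveSubmatrix (jacobiMatrix a b r s t) 0 (k + 2)).det =
      a * tridiagDet s (r * t) (k + 1) - b * r * tridiagDet s (r * t) k := by
  rw [isTridiagonal_jacobiMatrix.det_consecutiveSubmatrix_succ_succ,
    det_consecutiveSubmatrix_jacobiMatrix_succ, det_consecutiveSubmatrix_jacobiMatrix_succ 1]
  simp only [jacobiMatrix_zero_zero, zero_add, jacobiMatrix_self_succ, jacobiMatrix_one_zero]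
  ring

end jacobiMatrix

theorem jacobi_TP_iff (a b r s t : ℝ) (ha : 0 ≤ a) (hb : 0 ≤ b) (hr : 0 ≤ r)
    (hs : 0 ≤ s) (ht : 0 ≤ t) :
    IsTP (jacobiMatrix a b r s t) ↔
      s ^ 2 ≥ 4 * r * t ∧ a * (s + Real.sqrt (s ^ 2 - 4 * r * t)) / 2 ≥ b * r := by
  rw [isTridiagonal_jacobiMatrix.isTP_iff (jacobiMatrix_nonneg ha hb hr hs ht), mul_assoc 4 r t,
    ge_iff_le, ge_iff_le, mul_div_assoc]
  have hleading := @det_consecutiveSubmatrix_jacobiMatrix_zero a b r s t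
  constructor
  · intro h
    have hdisc := four_mul_le_sq_of_tridiagDet_nonneg fun n =>
      det_consecutiveSubmatrix_jacobiMatrix_succ 0 n ▸ h 1 n
    obtain ⟨μ, hsum, hprod, hμ, hμL⟩ := exists_roots_of_four_mul_le_sq hs (mul_nonneg hr ht) hdisc
    exact ⟨hdisc, le_mul_of_forall_mul_tridiagDet_le hsum hprod hμ hμL fun n => by
      linarith [hleading n ▸ h 0 (n + 2)]⟩
  · rintro ⟨hdisc, hbr⟩
    obtain ⟨μ, hsum, hprod, hμ, hμL⟩ := exists_roots_of_four_mul_le_sq hs (mul_nonneg hr ht) hdisc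
    have hD := tridiagDet_nonneg hsum hprod (hμ.trans hμL) hμ
    rintro (_ | p) (_ | _ | k)
    · simp
    · simpa [consecutiveSubmatrix] using ha
    · rw [hleading k]
      nlinarith [mul_tridiagDet_le_succ hsum hprod hμ k, hD k]
    all_goals rw [det_consecutiveSubmatrix_jacobiMatrix_succ]; exact hD _
end

section
/- Let R be a consistent Riordan array, i.e., the Riordan array determined by a nonnegative A-sequence (a_n) and Z-sequence (z_n) with z_n = a_n for all n, and let r ≥ 1. If (a_n) is a Pólya frequency sequence of order r (PF_r), then R is totally positive of order r (TP_r). -/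
/-!
Deleting the first row of a Riordan array `R` leaves the product `R * P` with its production
matrix `P`, whose columns `1, 2, …` form the Toeplitz matrix of `a` and whose column `0` holds
the Z-sequence. For a consistent array column `0` repeats column `1`, so `P` is TP_r as soon as
`a` is PF_r. By Cauchy–Binet, a minor of `R` avoiding row `0` is then a sum of products of
minors of `P` and minors of `R` with every row index lowered by one, while a minor through row
`0 = (1, 0, 0, …)` is, up to the factor `R 0 (cols 0) ∈ {0, 1}`, a minor of smaller order.
Induction on the sum of the row indices plus the order gives total positivity.
-/

/-- An infinite real matrix `M` is totally positive of order `r` (TP_r) if every minor of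
order `k ≤ r` (determinant of a `k × k` submatrix with rows and columns chosen in
increasing order) is nonnegative. -/
def IsTPOrder (r : ℕ) (M : ℕ → ℕ → ℝ) : Prop :=
  ∀ k : ℕ, k ≤ r → ∀ rows cols : Fin k → ℕ, StrictMono rows → StrictMono cols →
    0 ≤ (Matrix.of fun i j => M (rows i) (cols j)).det

/-- The Toeplitz matrix `[a_{i-j}]` of a sequence `a` (with `a m = 0` for `m < 0`). -/
def toeplitz (a : ℕ → ℝ) : ℕ → ℕ → ℝ := fun i j => if j ≤ i then a (i - j) else 0

/-- A nonnegative sequence is a Pólya frequency sequence of order `r` (PF_r)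
if its Toeplitz matrix is TP_r. -/
def IsPFOrder (r : ℕ) (a : ℕ → ℝ) : Prop := IsTPOrder r (toeplitz a)

open Finset Equiv

namespace Matrix

variable {R ι : Type*} [CommRing R] [Fintype ι] {k : ℕ}

theorem det_mul_eq_sum_prod_mul_det_submatrix (A : Matrix (Fin k) ι R)
    (B : Matrix ι (Fin k) R) :
    (A * B).det = ∑ p : Fin k → ι, (∏ i, B (p i) i) * (A.submatrix id p).det := by
  simp only [det_apply', mul_apply, prod_univ_sum, Finset.mul_sum, Fintype.piFinset_univ,
    submatrix_apply, id]
  rw [Finset.sum_comm]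
  refine sum_congr rfl fun p _ => sum_congr rfl fun σ _ => ?_
  rw [prod_mul_distrib]
  ring

theorem det_mul_eq_sum_det_submatrix_mul_det_submatrix [LinearOrder ι] (A : Matrix (Fin k) ι R)
    (B : Matrix ι (Fin k) R) :
    (A * B).det = ∑ m ∈ univ.filter (fun m : Fin k → ι => StrictMono m),
      (A.submatrix id m).det * (B.submatrix m id).det := by
  classical
  set g : (Fin k → ι) → R := fun p => (∏ i, B (p i) i) * (A.submatrix id p).det
  have h_inj :
      ∑ p, g p = ∑ p ∈ univ.filter (fun p : Fin k → ι => Function.Injective p), g p := by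
    refine (sum_subset (filter_subset _ _) fun p _ hp => ?_).symm
    obtain ⟨i, j, hij, hne⟩ := Function.not_injective_iff.mp (by simpa using hp)
    have hzero : (A.submatrix id p).det = 0 :=
      det_zero_of_column_eq hne fun l => by simp [hij]
    simp only [g, hzero, mul_zero]
  have h_sort : ∑ p ∈ univ.filter (fun p : Fin k → ι => Function.Injective p), g p
      = ∑ q ∈ univ.filter (fun m : Fin k → ι => StrictMono m) ×ˢ (univ : Finset (Perm _)),
          g (q.1 ∘ q.2) := by
    refine (sum_bij (fun q _ => q.1 ∘ q.2) ?_ ?_ ?_ fun _ _ => rfl).symm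
    · simp only [mem_product, mem_filter, mem_univ, true_and, and_true]
      exact fun q hq => hq.injective.comp q.2.injective
    · simp only [mem_product, mem_filter, mem_univ, true_and, and_true]
      rintro ⟨m₁, τ₁⟩ hm₁ ⟨m₂, τ₂⟩ hm₂ h
      obtain rfl : m₁ = m₂ := by
        rw [← hm₁.range_inj hm₂, ← τ₁.surjective.range_comp, h,
          τ₂.surjective.range_comp]
      exact Prod.ext rfl (Equiv.ext fun i => hm₁.injective (congrFun h i))
    · simp only [mem_product, mem_filter, mem_univ, true_and, and_true]
      intro p hp
      refine ⟨(p ∘ Tuple.sort p, (Tuple.sort p)⁻¹), ?_, ?_⟩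
      · exact (Tuple.monotone_sort p).strictMono_of_injective (hp.comp (Tuple.sort p).injective)
      · funext i; simp
  rw [det_mul_eq_sum_prod_mul_det_submatrix, h_inj, h_sort, sum_product]
  refine sum_congr rfl fun m _ => ?_
  have h_perm (τ : Perm (Fin k)) :
      (A.submatrix id (m ∘ τ)).det = Perm.sign τ * (A.submatrix id m).det := by
    rw [← det_permute', submatrix_submatrix, Function.id_comp]
  simp only [g, h_perm, det_apply' (B.submatrix m id), Finset.mul_sum, Function.comp_apply,
    submatrix_apply, id]
  refine sum_congr rfl fun τ _ => ?_
  ring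

theorem det_mul_nonneg_of_minors_nonneg [PartialOrder R] [IsOrderedRing R] [LinearOrder ι]
    {A : Matrix (Fin k) ι R} {B : Matrix ι (Fin k) R}
    (hA : ∀ m : Fin k → ι, StrictMono m → 0 ≤ (A.submatrix id m).det)
    (hB : ∀ m : Fin k → ι, StrictMono m → 0 ≤ (B.submatrix m id).det) :
    0 ≤ (A * B).det := by
  rw [det_mul_eq_sum_det_submatrix_mul_det_submatrix]
  exact sum_nonneg fun m hm => mul_nonneg (hA m (mem_filter.mp hm).2) (hB m (mem_filter.mp hm).2)

end Matrix

open Matrix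

theorem IsTPOrder.comp_monotone_right {r : ℕ} {M : ℕ → ℕ → ℝ} (hM : IsTPOrder r M)
    {f : ℕ → ℕ} (hf : Monotone f) : IsTPOrder r fun i j => M i (f j) := by
  intro k hk rows cols hrows hcols
  by_cases hinj : Function.Injective (f ∘ cols)
  · exact hM k hk rows _ hrows ((hf.comp hcols.monotone).strictMono_of_injective hinj)
  · obtain ⟨j₁, j₂, hj, hne⟩ := Function.not_injective_iff.mp hinj
    exact (det_zero_of_column_eq hne fun i => by simp_all).ge

/-- Truncated subtraction makes column `0` a copy of column `1`: the Z-column of the production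
matrix equals its first A-column, which is exactly consistency. -/
def productionMatrix (a : ℕ → ℝ) : ℕ → ℕ → ℝ := fun m c => toeplitz a m (c - 1)

theorem IsPFOrder.isTPOrder_productionMatrix {r : ℕ} {a : ℕ → ℝ} (ha : IsPFOrder r a) :
    IsTPOrder r (productionMatrix a) :=
  IsTPOrder.comp_monotone_right ha fun _ _ h => Nat.sub_le_sub_right h 1

section Production

variable {R P : ℕ → ℕ → ℝ}

theorem sum_range_mul_eq_of_lowerTriangular (htri : ∀ n k, n < k → R n k = 0) {n N : ℕ}
    (hN : n + 1 ≤ N) (x : ℕ → ℝ) :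
    ∑ m ∈ range N, R n m * x m = ∑ m ∈ range (n + 1), R n m * x m := by
  refine (sum_subset (range_subset_range.mpr hN) fun m _ hm => ?_).symm
  rw [htri n m (by simpa using hm), zero_mul]

theorem det_minor_eq_mul_det_minor_succ (htri : ∀ n k, n < k → R n k = 0) {k : ℕ}
    {rows cols : Fin (k + 1) → ℕ} (hcols : StrictMono cols) (h0 : rows 0 = 0) :
    (of fun i j => R (rows i) (cols j)).det
      = R 0 (cols 0) * (of fun (i j : Fin k) => R (rows i.succ) (cols j.succ)).det := by
  rw [det_succ_row_zero, Fintype.sum_eq_single 0 fun j hj => ?_]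
  · simp [h0, submatrix]
  · have : R (rows 0) (cols j) = 0 := by
      rw [h0]
      exact htri 0 _ ((Nat.zero_le _).trans_lt (hcols (Fin.pos_iff_ne_zero.mpr hj)))
    simp [this]

theorem minor_eq_mul_of_pos (htri : ∀ n k, n < k → R n k = 0)
    (hrec : ∀ n c, R (n + 1) c = ∑ m ∈ range (n + 1), R n m * P m c) {k N : ℕ}
    {rows : Fin k → ℕ} (cols : Fin k → ℕ) (hpos : ∀ i, 0 < rows i)
    (hN : ∀ i, rows i ≤ N) :
    (of fun i j => R (rows i) (cols j))
      = (of fun i (m : Fin N) => R (rows i - 1) m) * of fun (m : Fin N) j => P m (cols j) := by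
  ext i j
  simp only [of_apply, mul_apply]
  rw [Fin.sum_univ_eq_sum_range (fun m => R (rows i - 1) m * P m (cols j)),
    sum_range_mul_eq_of_lowerTriangular htri (by have := hpos i; have := hN i; omega), ← hrec,
    Nat.sub_add_cancel (hpos i)]

theorem det_minor_nonneg_of_production {r : ℕ} (hP : IsTPOrder r P)
    (htri : ∀ n k, n < k → R n k = 0) (hrow0 : ∀ c, 0 ≤ R 0 c)
    (hrec : ∀ n c, R (n + 1) c = ∑ m ∈ range (n + 1), R n m * P m c) :
    ∀ (k : ℕ) (rows cols : Fin k → ℕ), k ≤ r → StrictMono rows → StrictMono cols →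
      0 ≤ (of fun i j => R (rows i) (cols j)).det
  | 0, _, _, _, _, _ => by simp
  | k + 1, rows, cols, hk, hrows, hcols => by
    by_cases h0 : rows 0 = 0
    · rw [det_minor_eq_mul_det_minor_succ htri hcols h0]
      exact mul_nonneg (hrow0 _) (det_minor_nonneg_of_production hP htri hrow0 hrec k
        (rows ∘ Fin.succ) (cols ∘ Fin.succ) (by omega) (hrows.comp Fin.strictMono_succ)
        (hcols.comp Fin.strictMono_succ))
    · have hpos (i : Fin (k + 1)) : 0 < rows i :=
        (Nat.pos_of_ne_zero h0).trans_le (hrows.monotone (Fin.zero_le i))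
      rw [minor_eq_mul_of_pos htri hrec cols hpos fun i => hrows.monotone (Fin.le_last i)]
      refine det_mul_nonneg_of_minors_nonneg (fun m hm => ?_)
        fun m hm => hP _ hk _ _ (fun _ _ h => hm h) hcols
      exact det_minor_nonneg_of_production hP htri hrow0 hrec (k + 1) (fun i => rows i - 1)
        (fun j => m j) hk (fun i _ h => Nat.sub_lt_sub_right (hpos i) (hrows h)) fun _ _ h => hm h
termination_by k rows => ∑ i, rows i + k
decreasing_by
  · simp [Fin.sum_univ_succ, h0]
  · exact Nat.add_lt_add_right
      (sum_lt_sum (fun i _ => Nat.sub_le _ _) ⟨0, mem_univ _, Nat.sub_lt (hpos 0) one_pos⟩) _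

theorem IsTPOrder.of_production {r : ℕ} (hP : IsTPOrder r P)
    (htri : ∀ n k, n < k → R n k = 0) (hrow0 : ∀ c, 0 ≤ R 0 c)
    (hrec : ∀ n c, R (n + 1) c = ∑ m ∈ range (n + 1), R n m * P m c) : IsTPOrder r R :=
  fun k hk rows cols => det_minor_nonneg_of_production hP htri hrow0 hrec k rows cols hk

end Production

theorem riordan_succ_eq_sum_productionMatrix {a : ℕ → ℝ} {R : ℕ → ℕ → ℝ}
    (htri : ∀ n k, n < k → R n k = 0)
    (hZ : ∀ n, R (n + 1) 0 = ∑ j ∈ range (n + 1), a j * R n j)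
    (hA : ∀ n k, R (n + 1) (k + 1) = ∑ j ∈ range (n + 1), a j * R n (k + j)) (n c : ℕ) :
    R (n + 1) c = ∑ m ∈ range (n + 1), R n m * productionMatrix a m c := by
  rcases c with _ | c
  · simp [hZ, productionMatrix, toeplitz, mul_comm]
  · have hbelow : ∑ m ∈ range c, R n m * productionMatrix a m (c + 1) = 0 :=
      sum_eq_zero fun m hm => by
        simp [productionMatrix, toeplitz, Nat.not_le.mpr (mem_range.mp hm)]
    rw [hA, ← sum_range_mul_eq_of_lowerTriangular htri (N := c + (n + 1)) (by omega),
      sum_range_add _ c (n + 1), hbelow, zero_add]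
    simp [productionMatrix, toeplitz, mul_comm]

theorem consistent_riordan_TPOrder_of_PFOrder_general (a z : ℕ → ℝ)
    (hcons : ∀ n, z n = a n) (r : ℕ)
    (R : ℕ → ℕ → ℝ)
    (hR00 : R 0 0 = 1)
    (htri : ∀ n k, n < k → R n k = 0)
    (hZ : ∀ n, R (n + 1) 0 = ∑ j ∈ Finset.range (n + 1), z j * R n j)
    (hA : ∀ n k, R (n + 1) (k + 1) = ∑ j ∈ Finset.range (n + 1), a j * R n (k + j))
    (hPF : IsPFOrder r a) :
    IsTPOrder r R := by
  have hrow0 (c : ℕ) : 0 ≤ R 0 c := by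
    rcases c with _ | c
    · exact hR00 ▸ zero_le_one
    · exact (htri 0 (c + 1) c.succ_pos).ge
  have hZa (n : ℕ) : R (n + 1) 0 = ∑ j ∈ range (n + 1), a j * R n j := by
    simpa only [hcons] using hZ n
  exact hPF.isTPOrder_productionMatrix.of_production htri hrow0
    (riordan_succ_eq_sum_productionMatrix htri hZa hA)

theorem consistent_riordan_TPOrder_of_PFOrder (a z : ℕ → ℝ) (ha : ∀ n, 0 ≤ a n) (hz : ∀ n, 0 ≤ z n)
    (hcons : ∀ n, z n = a n) (r : ℕ) (hr : 1 ≤ r)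
    (R : ℕ → ℕ → ℝ)
    (hR00 : R 0 0 = 1)
    (htri : ∀ n k, n < k → R n k = 0)
    (hZ : ∀ n, R (n + 1) 0 = ∑ j ∈ Finset.range (n + 1), z j * R n j)
    (hA : ∀ n k, R (n + 1) (k + 1) = ∑ j ∈ Finset.range (n + 1), a j * R n (k + j))
    (hPF : IsPFOrder r a) :
    IsTPOrder r R :=
  consistent_riordan_TPOrder_of_PFOrder_general a z hcons r R hR00 htri hZ hA hPF
end
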